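/- Two-sided norm bound for the perturbed Drazin inverse: let A, E, B, X, Y be n×n quaternion matrices with B = A + E. Assume X is a k-Drazin inverse of A, Y is an m-Drazin inverse of B, E = (A * X) * E * (A * X), ‖X * E‖₂ < 1, 1 + X * E is a unit of the matrix ring, and ‖(1 + X * E)⁻¹‖₂ ≤ 1 / (1 - ‖X * E‖₂). Then ‖X‖₂ / (1 + ‖X * E‖₂) ≤ ‖Y‖₂ and ‖Y‖₂ ≤ ‖X‖₂ / (1 - ‖X * E‖₂). -/

import Mathlib

noncomputable section

notation "ℍ" => Quaternion ℝ

/-- The bounded ℝ-linear map `x ↦ M.mulVec x` between `PiLp 2` spaces of quaternion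
vectors. -/
def mulVecCLM {m n : ℕ} (M : Matrix (Fin m) (Fin n) ℍ) :
    PiLp 2 (fun _ : Fin n => ℍ) →L[ℝ] PiLp 2 (fun _ : Fin m => ℍ) :=
  LinearMap.toContinuousLinearMap
    { toFun := fun x => WithLp.toLp 2 (M.mulVec x)
      map_add' := fun x y => by
        first
          | simp [Matrix.mulVec_add]
          | rw [WithLp.ofLp_add, Matrix.mulVec_add, WithLp.toLp_add]
      map_smul' := fun r x => by
        first
          | simp [Matrix.mulVec_smul]
          | rw [WithLp.ofLp_smul, Matrix.mulVec_smul, WithLp.toLp_smul]; rfl }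

/-- The spectral norm of a quaternion matrix: the operator norm of `x ↦ M.mulVec x`. -/
def specNorm {m n : ℕ} (M : Matrix (Fin m) (Fin n) ℍ) : ℝ := ‖mulVecCLM M‖

/-- `X` is a `k`-Drazin inverse of the square quaternion matrix `A`. -/
def IsDrazinInverse {n : ℕ} (A X : Matrix (Fin n) (Fin n) ℍ) (k : ℕ) : Prop :=
  A ^ k * X * A = A ^ k ∧ X * A * X = X ∧ A * X = X * A

/-!
If `E = (A A^D) E (A A^D)` and `U = I + A^D E` is invertible, then `Z = U⁻¹ A^D` satisfies the
three Drazin equations for `B = A + E`: with the spectral idempotent `P = A A^D` one has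
`B Z = Z B = P`, and `E (I - P) = 0` makes `I - P` intertwine `A` with `B`, so
`B^k (I - P) = (I - P) A^k = 0`. By uniqueness of Drazin inverses `B^D = U⁻¹ A^D`, i.e.
`A^D = U B^D`, and submultiplicativity of the spectral norm gives both bounds.
-/

structure IsDrazinInv {M : Type*} [Monoid M] (a x : M) (k : ℕ) : Prop where
  pow_mul_mul_self : a ^ k * x * a = a ^ k
  mul_mul_self : x * a * x = x
  commute : Commute a x

theorem IsDrazinInverse.isDrazinInv {n k : ℕ} {A X : Matrix (Fin n) (Fin n) ℍ}
    (h : IsDrazinInverse A X k) : IsDrazinInv A X k :=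
  ⟨h.1, h.2.1, h.2.2⟩

namespace IsDrazinInv

section Monoid

variable {M : Type*} [Monoid M] {a x y : M} {k l : ℕ}

theorem isIdempotentElem_mul (h : IsDrazinInv a x k) : IsIdempotentElem (a * x) := by
  rw [IsIdempotentElem, mul_assoc, ← mul_assoc x, h.mul_mul_self]

theorem commute_mul (h : IsDrazinInv a x k) : Commute a (a * x) :=
  (Commute.refl a).mul_right h.commute

theorem pow_mul_mul_eq (h : IsDrazinInv a x k) : a ^ k * (a * x) = a ^ k := by
  rw [h.commute.eq, ← mul_assoc, h.pow_mul_mul_self]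

theorem mono (h : IsDrazinInv a x k) (hkl : k ≤ l) : IsDrazinInv a x l where
  pow_mul_mul_self := by
    rw [← Nat.sub_add_cancel hkl, pow_add, mul_assoc, mul_assoc, ← mul_assoc _ x,
      h.pow_mul_mul_self]
  mul_mul_self := h.mul_mul_self
  commute := h.commute

theorem mul_eq_pow_mul_pow (h : IsDrazinInv a x k) (n : ℕ) :
    a * x = a ^ (n + 1) * x ^ (n + 1) := by
  rw [← h.commute.mul_pow, h.isIdempotentElem_mul.pow_succ_eq]

theorem mul_eq_mul_mul (hx : IsDrazinInv a x k) (hy : IsDrazinInv a y k) :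
    a * x = a * y * (a * x) := by
  have hay : a * y * a ^ (k + 1) = a ^ (k + 1) := by
    rw [← (hy.commute_mul.pow_left _).eq, pow_succ, mul_assoc, hy.commute_mul.eq, ← mul_assoc,
      hy.pow_mul_mul_eq]
  rw [hx.mul_eq_pow_mul_pow k, ← mul_assoc, hay]

theorem mul_eq_mul_mul' (hx : IsDrazinInv a x k) (hy : IsDrazinInv a y k) :
    a * x = a * x * (a * y) := by
  have hay : a ^ (k + 1) * (a * y) = a ^ (k + 1) := by
    rw [pow_succ, mul_assoc, hy.commute_mul.eq, ← mul_assoc, hy.pow_mul_mul_eq]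
  rw [hx.mul_eq_pow_mul_pow k, (hx.commute.pow_pow _ _).eq, mul_assoc, hay]

theorem unique (hx : IsDrazinInv a x k) (hy : IsDrazinInv a y l) : x = y := by
  replace hx := hx.mono (le_max_left k l)
  replace hy := hy.mono (le_max_right k l)
  have hxy : a * x = a * y := (hx.mul_eq_mul_mul' hy).trans (hy.mul_eq_mul_mul hx).symm
  calc x = x * (a * x) := by rw [← mul_assoc, hx.mul_mul_self]
    _ = a * y * y := by rw [hxy, ← mul_assoc, ← hx.commute.eq, hxy]
    _ = y := by rw [hy.commute.eq, hy.mul_mul_self]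

end Monoid

section Ring

variable {R : Type*} [Ring R] {a e x : R} {k : ℕ}

theorem add_pow_mul_mul_eq (h : IsDrazinInv a x k) (hep : e * (a * x) = e) :
    (a + e) ^ k * (a * x) = (a + e) ^ k := by
  have hq : SemiconjBy (1 - a * x) a (a + e) := by
    rw [SemiconjBy, sub_mul, one_mul, mul_sub, mul_one, add_mul, hep, ← h.commute_mul.eq]
    abel
  have hqk : (a + e) ^ k * (1 - a * x) = 0 := by
    rw [← (hq.pow_right k).eq, sub_mul, one_mul, ← (h.commute_mul.pow_left k).eq,
      h.pow_mul_mul_eq, sub_self]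
  rwa [mul_sub, mul_one, sub_eq_zero, eq_comm] at hqk

theorem add (h : IsDrazinInv a x k) (he : e = a * x * e * (a * x))
    (hu : IsUnit (1 + x * e)) : IsDrazinInv (a + e) (Ring.inverse (1 + x * e) * x) k := by
  obtain ⟨u, hu⟩ := hu
  rw [← hu, Ring.inverse_unit]
  have hp : IsIdempotentElem (a * x) := h.isIdempotentElem_mul
  set p := a * x with hp_def
  clear_value p
  have hpe : p * e = e := by
    conv_lhs => rw [he]
    rw [← mul_assoc, ← mul_assoc, hp.eq, ← he]
  have hep : e * p = e := by
    conv_lhs => rw [he]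
    rw [mul_assoc, hp.eq, ← he]
  have hpx : p * x = x := by rw [hp_def, h.commute.eq, h.mul_mul_self]
  have hau : a * u = a + e := by rw [hu, mul_add, mul_one, ← mul_assoc, ← hp_def, hpe]
  have hxb : x * (a + e) = u * p := by
    rw [hu, mul_add, add_mul, one_mul, mul_assoc, hep, hp_def, h.commute.eq]
  have hpu : Commute p u := by
    rw [Commute, SemiconjBy, hu, mul_add, add_mul, mul_one, one_mul, ← mul_assoc, hpx,
      mul_assoc, hep]
  have hbz : (a + e) * (↑u⁻¹ * x) = p := by
    rw [← hau, mul_assoc, ← mul_assoc (u : R), Units.mul_inv, one_mul, hp_def]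
  have hzb : ↑u⁻¹ * x * (a + e) = p := by
    rw [mul_assoc, hxb, ← mul_assoc, Units.inv_mul, one_mul]
  refine ⟨?_, ?_, hbz.trans hzb.symm⟩
  · rw [mul_assoc, hzb, hp_def, h.add_pow_mul_mul_eq (hp_def ▸ hep)]
  · rw [hzb, ← mul_assoc, hpu.units_inv_right.eq, mul_assoc, hpx]

end Ring

end IsDrazinInv

section SpectralNorm

theorem mulVecCLM_mul {l m n : ℕ} (M : Matrix (Fin l) (Fin m) ℍ) (N : Matrix (Fin m) (Fin n) ℍ) :
    mulVecCLM (M * N) = (mulVecCLM M).comp (mulVecCLM N) :=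
  ContinuousLinearMap.ext fun x => congrArg (WithLp.toLp 2) (Matrix.mulVec_mulVec x.ofLp M N).symm

theorem mulVecCLM_add {m n : ℕ} (M N : Matrix (Fin m) (Fin n) ℍ) :
    mulVecCLM (M + N) = mulVecCLM M + mulVecCLM N :=
  ContinuousLinearMap.ext fun x => congrArg (WithLp.toLp 2) (Matrix.add_mulVec M N x.ofLp)

theorem mulVecCLM_one {n : ℕ} :
    mulVecCLM (1 : Matrix (Fin n) (Fin n) ℍ) = ContinuousLinearMap.id ℝ _ :=
  ContinuousLinearMap.ext fun x => congrArg (WithLp.toLp 2) (Matrix.one_mulVec x.ofLp)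

theorem specNorm_nonneg {m n : ℕ} (M : Matrix (Fin m) (Fin n) ℍ) : 0 ≤ specNorm M :=
  norm_nonneg (mulVecCLM M)

theorem specNorm_mul_le {l m n : ℕ} (M : Matrix (Fin l) (Fin m) ℍ)
    (N : Matrix (Fin m) (Fin n) ℍ) : specNorm (M * N) ≤ specNorm M * specNorm N := by
  rw [specNorm, mulVecCLM_mul]
  exact ContinuousLinearMap.opNorm_comp_le _ _

theorem specNorm_add_le {m n : ℕ} (M N : Matrix (Fin m) (Fin n) ℍ) :
    specNorm (M + N) ≤ specNorm M + specNorm N := by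
  rw [specNorm, mulVecCLM_add]
  exact norm_add_le (mulVecCLM M) (mulVecCLM N)

theorem specNorm_one_le {n : ℕ} : specNorm (1 : Matrix (Fin n) (Fin n) ℍ) ≤ 1 := by
  rw [specNorm, mulVecCLM_one]
  exact ContinuousLinearMap.norm_id_le

theorem specNorm_one_add_le {n : ℕ} (M : Matrix (Fin n) (Fin n) ℍ) :
    specNorm (1 + M) ≤ 1 + specNorm M :=
  (specNorm_add_le 1 M).trans (add_le_add_left specNorm_one_le _)

end SpectralNorm

theorem drazin_perturbation_norm_bounds_general {n : ℕ}
    (A E B X Y : Matrix (Fin n) (Fin n) ℍ) (k m : ℕ)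
    (hB : B = A + E)
    (hX : IsDrazinInverse A X k) (hY : IsDrazinInverse B Y m)
    (hE : E = (A * X) * E * (A * X))
    (hU : IsUnit (1 + X * E))
    (hinv : specNorm (Ring.inverse (1 + X * E)) ≤ 1 / (1 - specNorm (X * E))) :
    specNorm X / (1 + specNorm (X * E)) ≤ specNorm Y ∧
    specNorm Y ≤ specNorm X / (1 - specNorm (X * E)) := by
  subst hB
  have hYX : Y = Ring.inverse (1 + X * E) * X :=
    hY.isDrazinInv.unique (hX.isDrazinInv.add hE hU)
  have hXY : X = (1 + X * E) * Y := by
    rw [hYX, ← mul_assoc, Ring.mul_inverse_cancel _ hU, one_mul]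
  constructor
  · rw [div_le_iff₀ (by linarith [specNorm_nonneg (X * E)])]
    calc specNorm X = specNorm ((1 + X * E) * Y) := congrArg specNorm hXY
      _ ≤ specNorm (1 + X * E) * specNorm Y := specNorm_mul_le _ _
      _ ≤ (1 + specNorm (X * E)) * specNorm Y :=
          mul_le_mul_of_nonneg_right (specNorm_one_add_le _) (specNorm_nonneg Y)
      _ = specNorm Y * (1 + specNorm (X * E)) := mul_comm _ _
  · calc specNorm Y = specNorm (Ring.inverse (1 + X * E) * X) := congrArg specNorm hYX
      _ ≤ specNorm (Ring.inverse (1 + X * E)) * specNorm X := specNorm_mul_le _ _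
      _ ≤ 1 / (1 - specNorm (X * E)) * specNorm X :=
          mul_le_mul_of_nonneg_right hinv (specNorm_nonneg X)
      _ = specNorm X / (1 - specNorm (X * E)) := one_div_mul_eq_div _ _

/-- Two-sided norm bound for the perturbed Drazin inverse. -/
theorem drazin_perturbation_norm_bounds {n : ℕ}
    (A E B X Y : Matrix (Fin n) (Fin n) ℍ) (k m : ℕ)
    (hB : B = A + E)
    (hX : IsDrazinInverse A X k) (hY : IsDrazinInverse B Y m)
    (hE : E = (A * X) * E * (A * X))
    (hnorm : specNorm (X * E) < 1)
    (hU : IsUnit (1 + X * E))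
    (hinv : specNorm (Ring.inverse (1 + X * E)) ≤ 1 / (1 - specNorm (X * E))) :
    specNorm X / (1 + specNorm (X * E)) ≤ specNorm Y ∧
    specNorm Y ≤ specNorm X / (1 - specNorm (X * E)) :=
  drazin_perturbation_norm_bounds_general A E B X Y k m hB hX hY hE hU hinv
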